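/- arXiv:2103.15465 — 5 statements merged into one kernel-verified Lean document; each statement's English description precedes it below -/
import Mathlib

section
/- For non-negative integers k, l, m with l ≥ k, one has (1/(π·m!)) ∫_ℂ w̄^k · w^l · K_m(z,w) · |w|^{2m} · e^{-|w|²} dA(w) = ((l+m)!/(l-k+m)!) · z^{l-k}, where K_m(z,w) = Σ_{n≥0} (m!/(n+m)!)(z·w̄)^n. -/
open MeasureTheory Complex

/-- The reproducing kernel of the Fock-Sobolev space `F^{2,m}(ℂ)`. -/
noncomputable def fockKernel (m : ℕ) (z w : ℂ) : ℂ :=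
  ∑' n : ℕ, ((Nat.factorial m : ℂ) / (Nat.factorial (n + m))) * (z * (starRingEnd ℂ) w) ^ n

/-!
Expand `K_m(z, ·)` into its power series and integrate term by term; the interchange is justified
by dominated convergence, with `‖w‖ ^ p * exp (-‖w‖ ^ 2) * exp (‖z‖ * ‖w‖)` as integrable majorant.
In polar coordinates the moment `∫ w̄ ^ a * w ^ b * |w| ^ (2m) * exp (-|w| ^ 2) dA` splits into a
radial Gamma integral and the angular integral of `exp (i (b - a) θ)`, which vanishes unless
`a = b`; then it equals `π (a + m)!`. Hence only the term `n = l - k` of the series survives.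
-/

open Set Nat ComplexConjugate
open scoped Real

lemma integral_Ioo_neg_pi_pi_cexp_int_mul_I (d : ℤ) :
    ∫ θ in Ioo (-π) π, cexp (d * θ * I) = if d = 0 then ((2 * π : ℝ) : ℂ) else 0 := by
  split_ifs with hd
  · simp only [hd, Int.cast_zero, zero_mul, exp_zero, integral_const, MeasurableSet.univ,
      measureReal_restrict_apply, univ_inter, sub_neg_eq_add, real_smul, ofReal_add, ofReal_mul,
      ofReal_ofNat, mul_one, Real.volume_real_Ioo_of_le (neg_le_self Real.pi_pos.le)]
    ring
  · have hdI : (d : ℂ) * I ≠ 0 := mul_ne_zero (Int.cast_ne_zero.2 hd) I_ne_zero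
    simp_rw [mul_right_comm _ _ I]
    rw [← integral_Ioc_eq_integral_Ioo,
      ← intervalIntegral.integral_of_le (neg_le_self Real.pi_pos.le), integral_exp_mul_complex hdI,
      show (d : ℂ) * I * π = d * I * (-π : ℝ) + d * (2 * π * I) by push_cast; ring,
      Complex.exp_add, exp_int_mul_two_pi_mul_I, mul_one, sub_self, zero_div]

lemma integral_Ioi_pow_mul_exp_neg_sq (n : ℕ) :
    ∫ r in Ioi (0 : ℝ), r ^ (2 * n + 1) * rexp (-r ^ 2) = n ! / 2 := by
  have h := _root_.integral_rpow_mul_exp_neg_rpow (p := 2) (q := (2 * n + 1 : ℕ)) two_pos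
    (by push_cast; linarith [n.cast_nonneg (α := ℝ)])
  rw [show (((2 * n + 1 : ℕ) : ℝ) + 1) / 2 = n + 1 by push_cast; ring,
    Real.Gamma_nat_eq_factorial] at h
  simp_rw [Real.rpow_natCast, Real.rpow_two] at h
  rw [h]
  ring

lemma conj_pow_mul_pow_polarCoord_symm (a b : ℕ) (r θ : ℝ) :
    conj (Complex.polarCoord.symm (r, θ)) ^ a * Complex.polarCoord.symm (r, θ) ^ b =
      (r : ℂ) ^ (a + b) * cexp (((b - a : ℤ) : ℂ) * θ * I) := by
  have hw : Complex.polarCoord.symm (r, θ) = r * cexp (θ * I) := by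
    rw [Complex.polarCoord_symm_apply, exp_mul_I]; push_cast; ring
  rw [hw, map_mul, conj_ofReal, ← exp_conj, map_mul, conj_ofReal, conj_I, mul_pow, mul_pow,
    ← exp_nat_mul, ← exp_nat_mul, pow_add, mul_mul_mul_comm, ← Complex.exp_add]
  push_cast
  ring_nf

lemma integral_conj_pow_mul_pow_mul_exp_neg_norm_sq (a b : ℕ) :
    ∫ w : ℂ, conj w ^ a * w ^ b * (rexp (-‖w‖ ^ 2) : ℂ) = if a = b then (π : ℂ) * a ! else 0 := by
  have h_polar : ∀ p ∈ Ioi (0 : ℝ) ×ˢ Ioo (-π) π,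
      p.1 • (conj (Complex.polarCoord.symm p) ^ a * Complex.polarCoord.symm p ^ b *
        (rexp (-‖Complex.polarCoord.symm p‖ ^ 2) : ℂ)) =
      ((p.1 : ℂ) ^ (a + b + 1) * (rexp (-p.1 ^ 2) : ℂ)) * cexp (((b - a : ℤ) : ℂ) * p.2 * I) := by
    rintro ⟨r, θ⟩ ⟨hr, -⟩
    rw [conj_pow_mul_pow_polarCoord_symm, Complex.norm_polarCoord_symm, abs_of_pos hr,
      real_smul]
    ring
  rw [← Complex.integral_comp_polarCoord_symm, polarCoord_target,
    setIntegral_congr_fun (measurableSet_Ioi.prod measurableSet_Ioo) h_polar,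
    Measure.volume_eq_prod, setIntegral_prod_mul
      (fun r : ℝ => (r : ℂ) ^ (a + b + 1) * (rexp (-r ^ 2) : ℂ))
      (fun θ : ℝ => cexp (((b - a : ℤ) : ℂ) * θ * I)),
    integral_Ioo_neg_pi_pi_cexp_int_mul_I]
  by_cases hab : a = b
  · subst hab
    have h_radial := congrArg (fun x : ℝ => (x : ℂ)) (integral_Ioi_pow_mul_exp_neg_sq a)
    rw [← integral_complex_ofReal] at h_radial
    simp only [ofReal_mul, ofReal_pow] at h_radial
    rw [← two_mul, h_radial]
    simp only [ofReal_div, ofReal_natCast, ofReal_ofNat, sub_self, ↓reduceIte, ofReal_mul]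
    ring
  · rw [if_neg (by omega), if_neg hab, mul_zero]

lemma ofReal_norm_pow_two_mul (w : ℂ) (m : ℕ) : (‖w‖ : ℂ) ^ (2 * m) = conj w ^ m * w ^ m := by
  rw [pow_mul, ← ofReal_pow, Complex.sq_norm, ← Complex.mul_conj, mul_pow, mul_comm]

lemma integral_conj_pow_mul_pow_mul_norm_pow_mul_exp_neg_norm_sq (a b m : ℕ) :
    ∫ w : ℂ, conj w ^ a * w ^ b * (‖w‖ : ℂ) ^ (2 * m) * (rexp (-‖w‖ ^ 2) : ℂ) =
      if a = b then (π : ℂ) * (a + m) ! else 0 := by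
  have h_integrand : ∀ w : ℂ, conj w ^ a * w ^ b * (‖w‖ : ℂ) ^ (2 * m) * (rexp (-‖w‖ ^ 2) : ℂ) =
      conj w ^ (a + m) * w ^ (b + m) * (rexp (-‖w‖ ^ 2) : ℂ) := fun w ↦ by
    rw [ofReal_norm_pow_two_mul]
    ring
  simp_rw [h_integrand, integral_conj_pow_mul_pow_mul_exp_neg_norm_sq, Nat.add_right_cancel_iff]

lemma factorial_div_factorial_add_le (m n : ℕ) : (m ! : ℝ) / (n + m) ! ≤ 1 / n ! := by
  rw [div_le_div_iff₀ (by positivity) (by positivity), one_mul, mul_comm]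
  exact_mod_cast Nat.le_of_dvd (factorial_pos _) (factorial_mul_factorial_dvd_factorial_add n m)

lemma norm_fockKernel_term_le (m n : ℕ) (z w : ℂ) :
    ‖(m ! : ℂ) / (n + m) ! * (z * conj w) ^ n‖ ≤ (‖z‖ * ‖w‖) ^ n / n ! := by
  rw [norm_mul, norm_pow, norm_mul, norm_conj, norm_div, norm_natCast, norm_natCast,
    div_eq_mul_one_div _ (n ! : ℝ), mul_comm _ (1 / _)]
  exact mul_le_mul_of_nonneg_right (factorial_div_factorial_add_le m n) (by positivity)

lemma hasSum_fockKernel (m : ℕ) (z w : ℂ) :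
    HasSum (fun n ↦ (m ! : ℂ) / (n + m) ! * (z * conj w) ^ n) (fockKernel m z w) :=
  (Summable.of_norm_bounded (Real.summable_pow_div_factorial _)
    (norm_fockKernel_term_le m · z w)).hasSum

section

variable {V : Type*} [NormedAddCommGroup V] [InnerProductSpace ℝ V] [FiniteDimensional ℝ V]
  [MeasurableSpace V] [BorelSpace V]

lemma integrable_exp_neg_mul_norm_sq {b : ℝ} (hb : 0 < b) :
    Integrable (fun v : V ↦ rexp (-b * ‖v‖ ^ 2)) := by
  have h := (GaussianFourier.integrable_cexp_neg_mul_sq_norm_add (V := V) (b := b)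
    (by simpa using hb) 0 0).norm
  simp_rw [zero_mul, add_zero, ← ofReal_pow, ← ofReal_neg, ← ofReal_mul, norm_exp_ofReal] at h
  exact h

lemma integrable_norm_pow_mul_exp_neg_norm_sq_mul_exp (p : ℕ) (c : ℝ) :
    Integrable (fun v : V ↦ ‖v‖ ^ p * rexp (-‖v‖ ^ 2) * rexp (c * ‖v‖)) := by
  refine ((integrable_exp_neg_mul_norm_sq (V := V) one_half_pos).const_mul
    (p ! * rexp ((c + 1) ^ 2 / 2))).mono' (by fun_prop) (ae_of_all _ fun v ↦ ?_)
  set t := ‖v‖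
  have ht : 0 ≤ t := norm_nonneg v
  have h_pow : t ^ p ≤ p ! * rexp t := by
    have := Real.pow_div_factorial_le_exp t ht p
    rwa [div_le_iff₀ (by positivity), mul_comm] at this
  -- `(c + 1) t ≤ ((c + 1) ^ 2 + t ^ 2) / 2`
  have h_exponent : t + c * t - t ^ 2 ≤ (c + 1) ^ 2 / 2 + -(1 / 2) * t ^ 2 := by
    nlinarith [sq_nonneg (c + 1 - t)]
  rw [Real.norm_of_nonneg (by positivity)]
  calc t ^ p * rexp (-t ^ 2) * rexp (c * t)
      ≤ p ! * rexp t * rexp (-t ^ 2) * rexp (c * t) := by gcongr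
    _ = p ! * rexp (t + c * t - t ^ 2) := by
      rw [sub_eq_add_neg, Real.exp_add, Real.exp_add]; ring
    _ ≤ p ! * rexp ((c + 1) ^ 2 / 2 + -(1 / 2) * t ^ 2) := by gcongr
    _ = p ! * rexp ((c + 1) ^ 2 / 2) * rexp (-(1 / 2) * t ^ 2) := by
      rw [Real.exp_add]; ring

end

lemma tsum_pow_div_factorial (x : ℝ) : ∑' n : ℕ, x ^ n / n ! = rexp x := by
  rw [Real.exp_eq_exp_ℝ, NormedSpace.exp_eq_tsum_div]

lemma hasSum_integral_fockKernel_term_mul (m p : ℕ) (z : ℂ) {F : ℂ → ℂ} (hF : Continuous F)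
    (hF_le : ∀ w, ‖F w‖ ≤ ‖w‖ ^ p * rexp (-‖w‖ ^ 2)) :
    HasSum (fun n ↦ ∫ w, (m ! : ℂ) / (n + m) ! * (z * conj w) ^ n * F w)
      (∫ w, fockKernel m z w * F w) := by
  refine hasSum_integral_of_dominated_convergence
    (fun n w ↦ (‖z‖ * ‖w‖) ^ n / n ! * (‖w‖ ^ p * rexp (-‖w‖ ^ 2)))
    (fun n ↦ by fun_prop) (fun n ↦ ae_of_all _ fun w ↦ ?_)
    (ae_of_all _ fun w ↦ (Real.summable_pow_div_factorial _).mul_right _) ?_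
    (ae_of_all _ fun w ↦ (hasSum_fockKernel m z w).mul_right (F w))
  · rw [norm_mul]
    exact mul_le_mul (norm_fockKernel_term_le m n z w) (hF_le w) (norm_nonneg _) (by positivity)
  · simp_rw [tsum_mul_right, tsum_pow_div_factorial]
    convert integrable_norm_pow_mul_exp_neg_norm_sq_mul_exp (V := ℂ) p ‖z‖ using 2 with w
    ring

lemma integral_fockKernel_term_mul_conj_pow_mul_pow (k l m n : ℕ) (z : ℂ) :
    ∫ w, (m ! : ℂ) / (n + m) ! * (z * conj w) ^ n *
        (conj w ^ k * w ^ l * (‖w‖ : ℂ) ^ (2 * m) * (rexp (-‖w‖ ^ 2) : ℂ)) =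
      if n + k = l then (m ! : ℂ) / (n + m) ! * z ^ n * (π * (l + m) !) else 0 := by
  have h_integrand : ∀ w : ℂ, (m ! : ℂ) / (n + m) ! * (z * conj w) ^ n *
      (conj w ^ k * w ^ l * (‖w‖ : ℂ) ^ (2 * m) * (rexp (-‖w‖ ^ 2) : ℂ)) =
      (m ! : ℂ) / (n + m) ! * z ^ n *
        (conj w ^ (n + k) * w ^ l * (‖w‖ : ℂ) ^ (2 * m) * (rexp (-‖w‖ ^ 2) : ℂ)) := fun w ↦ by
    ring
  simp_rw [h_integrand, integral_const_mul,
    integral_conj_pow_mul_pow_mul_norm_pow_mul_exp_neg_norm_sq]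
  split_ifs with h
  · rw [h]
  · rw [mul_zero]

lemma norm_conj_pow_mul_pow_mul_norm_pow_mul_exp_neg_norm_sq (k l m : ℕ) (w : ℂ) :
    ‖conj w ^ k * w ^ l * (‖w‖ : ℂ) ^ (2 * m) * (rexp (-‖w‖ ^ 2) : ℂ)‖ =
      ‖w‖ ^ (k + l + 2 * m) * rexp (-‖w‖ ^ 2) := by
  simp only [norm_mul, norm_pow, norm_conj, norm_real, norm_norm,
    Real.norm_of_nonneg (Real.exp_pos _).le, pow_add]

theorem stmt0 (k l m : ℕ) (hlk : k ≤ l) (z : ℂ) :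
    (1 / ((Real.pi : ℂ) * (Nat.factorial m : ℂ))) *
      ∫ w : ℂ, ((starRingEnd ℂ) w) ^ k * w ^ l * fockKernel m z w *
        ((‖w‖ : ℂ)) ^ (2 * m) * (Real.exp (-(‖w‖) ^ 2) : ℂ)
    = ((Nat.factorial (l + m) : ℂ) / (Nat.factorial (l - k + m) : ℂ)) * z ^ (l - k) := by
  set F : ℂ → ℂ := fun w ↦ conj w ^ k * w ^ l * (‖w‖ : ℂ) ^ (2 * m) * (rexp (-‖w‖ ^ 2) : ℂ)
  have h_sum := hasSum_integral_fockKernel_term_mul m (k + l + 2 * m) z (F := F) (by fun_prop)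
    fun w ↦ (norm_conj_pow_mul_pow_mul_norm_pow_mul_exp_neg_norm_sq k l m w).le
  have h_term (n : ℕ) : ∫ w, (m ! : ℂ) / (n + m) ! * (z * conj w) ^ n * F w =
      if n = l - k then (m ! : ℂ) / (l - k + m) ! * z ^ (l - k) * (π * (l + m) !) else 0 := by
    rw [integral_fockKernel_term_mul_conj_pow_mul_pow]
    by_cases hn : n = l - k
    · rw [if_pos (by omega), if_pos hn, hn]
    · rw [if_neg (by omega), if_neg hn]
  have h_integrand : (fun w : ℂ ↦ conj w ^ k * w ^ l * fockKernel m z w *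
      (‖w‖ : ℂ) ^ (2 * m) * (rexp (-‖w‖ ^ 2) : ℂ)) = fun w ↦ fockKernel m z w * F w := by
    ext w; ring
  rw [h_integrand, ← h_sum.tsum_eq, tsum_congr h_term, tsum_ite_eq]
  have hm : (m ! : ℂ) ≠ 0 := Nat.cast_ne_zero.2 (factorial_ne_zero m)
  field_simp
end

section
/- For non-negative integers k, l, j, m with j + l ≥ k, one has (1/(π·m!)) ∫_ℂ w^l · w̄^k · w^j · K_m(z,w) · |w|^{2m} · e^{-|w|²} dA(w) = ((j+l+m)!/(j+l-k+m)!) · z^{j+l-k}, where K_m(z,w) = Σ_{n≥0} (m!/(n+m)!)(z·w̄)^n. -/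
/-!
Expanding the kernel, the integrand becomes `w ^ a * conj w ^ b * exp (-|w|²)` times a power series
in `z * conj w` whose coefficients are at most `1 / n!`; the series is therefore dominated by
`|w| ^ (a + b) * exp (-|w|² + |z| |w|)` and may be integrated termwise. The Gaussian moment
`∫ w ^ a * conj w ^ b * exp (-|w|²)` vanishes for `a ≠ b`, since rotating `w` by the angle
`π / (a - b)` changes its sign, and equals `π a!` for `a = b`. Only the term with `b + n = a`
survives.
-/

open MeasureTheory Complex

open Filter ComplexConjugate
open scoped Nat Real

lemma integral_pow_mul_conj_pow_self_mul_gaussian (a : ℕ) :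
    ∫ w : ℂ, w ^ a * conj w ^ a * (Real.exp (-‖w‖ ^ 2) : ℂ) = π * a ! := by
  have hnorm : ∀ w : ℂ, w ^ a * conj w ^ a * (Real.exp (-‖w‖ ^ 2) : ℂ) =
      ((‖w‖ ^ ((2 * a : ℕ) : ℝ) * Real.exp (-‖w‖ ^ (2 : ℝ)) : ℝ) : ℂ) := fun w => by
    rw [← mul_pow, mul_conj', ← pow_mul, Real.rpow_two, Real.rpow_natCast]
    norm_cast
  have hgamma : (((2 * a : ℕ) : ℝ) + 2) / 2 = a + 1 := by push_cast; ring
  rw [integral_congr_ae (Eventually.of_forall hnorm), integral_complex_ofReal,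
    Complex.integral_rpow_mul_exp_neg_rpow one_le_two (by push_cast; linarith), hgamma,
    Real.Gamma_nat_eq_factorial]
  push_cast
  ring

lemma integral_pow_mul_conj_pow_mul_gaussian_of_ne {a b : ℕ} (hab : a ≠ b) :
    ∫ w : ℂ, w ^ a * conj w ^ b * (Real.exp (-‖w‖ ^ 2) : ℂ) = 0 := by
  set f : ℂ → ℂ := fun w => w ^ a * conj w ^ b * (Real.exp (-‖w‖ ^ 2) : ℂ)
  have hd : ((a : ℂ) - b) ≠ 0 := sub_ne_zero.2 (by exact_mod_cast hab)
  set u : Circle := Circle.exp (π / ((a : ℝ) - b))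
  have hu : (u : ℂ) ^ a * conj (u : ℂ) ^ b = -1 := by
    rw [Circle.coe_exp, ← exp_conj, ← exp_nat_mul, ← exp_nat_mul, ← exp_add, map_mul,
      conj_ofReal, conj_I, ← exp_pi_mul_I]
    congr 1
    push_cast
    field_simp
    ring
  have hrot : ∀ w, f (rotation u w) = -f w := fun w => by
    simp only [f, rotation_apply, map_mul, mul_pow, norm_mul, Circle.norm_coe, one_mul]
    linear_combination (w ^ a * conj w ^ b * (Real.exp (-‖w‖ ^ 2) : ℂ)) * hu
  have := integral_comp (rotation u) f
  simp only [hrot, integral_neg] at this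
  exact self_eq_neg.1 this.symm

section Gaussian

variable {V : Type*} [NormedAddCommGroup V] [InnerProductSpace ℝ V] [FiniteDimensional ℝ V]
  [MeasurableSpace V] [BorelSpace V]

lemma integrable_exp_neg_mul_sq_norm {b : ℝ} (hb : 0 < b) :
    Integrable (fun v : V => Real.exp (-b * ‖v‖ ^ 2)) := by
  refine (GaussianFourier.integrable_cexp_neg_mul_sq_norm_add (V := V) (b := b) (by simpa) 0 0
    ).norm.congr (Eventually.of_forall fun v => ?_)
  simp [norm_exp, ← ofReal_pow]

lemma integrable_pow_norm_mul_exp_neg_sq_mul_exp (L : ℕ) (s : ℝ) :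
    Integrable (fun v : V => ‖v‖ ^ L * Real.exp (-‖v‖ ^ 2) * Real.exp (s * ‖v‖)) := by
  refine ((integrable_exp_neg_mul_sq_norm (V := V) one_half_pos).const_mul
    (L ! * Real.exp ((1 + s) ^ 2 / 2))).mono' (by fun_prop) (Eventually.of_forall fun v => ?_)
  set r := ‖v‖
  have hpow : r ^ L ≤ L ! * Real.exp r := by
    have := Real.pow_div_factorial_le_exp r (norm_nonneg v) L
    rwa [div_le_iff₀ (by positivity), mul_comm] at this
  have hsq : r + -r ^ 2 + s * r ≤ (1 + s) ^ 2 / 2 + -(1 / 2) * r ^ 2 := by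
    nlinarith [sq_nonneg (1 + s - r)]
  rw [Real.norm_of_nonneg (by positivity)]
  calc r ^ L * Real.exp (-r ^ 2) * Real.exp (s * r)
      ≤ L ! * Real.exp r * Real.exp (-r ^ 2) * Real.exp (s * r) := by gcongr
    _ = L ! * Real.exp (r + -r ^ 2 + s * r) := by rw [Real.exp_add, Real.exp_add]; ring
    _ ≤ L ! * Real.exp ((1 + s) ^ 2 / 2 + -(1 / 2) * r ^ 2) := by gcongr
    _ = _ := by rw [Real.exp_add]; ring

end Gaussian

section PowerSeries

variable {α : Type*} [MeasurableSpace α] {μ : Measure α} {c : ℕ → ℂ}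

lemma norm_mul_pow_le_pow_div_factorial (hc : ∀ n, ‖c n‖ ≤ 1 / n !) (n : ℕ) (x : ℂ) :
    ‖c n * x ^ n‖ ≤ ‖x‖ ^ n / n ! := by
  rw [norm_mul, norm_pow, div_eq_mul_one_div, mul_comm (‖x‖ ^ n)]
  exact mul_le_mul_of_nonneg_right (hc n) (by positivity)

lemma Real.hasSum_pow_div_factorial (x : ℝ) : HasSum (fun n => x ^ n / n !) (Real.exp x) := by
  simpa [Real.exp_eq_exp_ℝ, div_eq_inv_mul] using NormedSpace.exp_series_hasSum_exp' (𝕂 := ℝ) x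

lemma hasSum_integral_mul_series (hc : ∀ n, ‖c n‖ ≤ 1 / n !) {g x : α → ℂ}
    (hg : AEStronglyMeasurable g μ) (hx : AEStronglyMeasurable x μ)
    (hint : Integrable (fun a => ‖g a‖ * Real.exp ‖x a‖) μ) :
    HasSum (fun n => ∫ a, g a * (c n * x a ^ n) ∂μ) (∫ a, g a * ∑' n, c n * x a ^ n ∂μ) := by
  have hbound (n : ℕ) (a : α) : ‖g a * (c n * x a ^ n)‖ ≤ ‖g a‖ * (‖x a‖ ^ n / n !) := by
    rw [norm_mul]
    exact mul_le_mul_of_nonneg_left (norm_mul_pow_le_pow_div_factorial hc n _) (norm_nonneg _)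
  have hexp (a : α) : HasSum (fun n => ‖g a‖ * (‖x a‖ ^ n / n !)) (‖g a‖ * Real.exp ‖x a‖) :=
    (Real.hasSum_pow_div_factorial _).mul_left _
  have hseries (a : α) : HasSum (fun n => g a * (c n * x a ^ n)) (g a * ∑' n, c n * x a ^ n) :=
    ((Real.summable_pow_div_factorial ‖x a‖).of_norm_bounded
      (norm_mul_pow_le_pow_div_factorial hc · _)).hasSum.mul_left (g a)
  exact hasSum_integral_of_dominated_convergence _
    (fun n => hg.mul (aestronglyMeasurable_const.mul (hx.pow n)))
    (fun n => Eventually.of_forall (hbound n)) (Eventually.of_forall fun a => (hexp a).summable)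
    (hint.congr (Eventually.of_forall fun a => (hexp a).tsum_eq.symm))
    (Eventually.of_forall hseries)

end PowerSeries

lemma integral_pow_mul_conj_pow_mul_series_mul_gaussian {c : ℕ → ℂ}
    (hc : ∀ n, ‖c n‖ ≤ 1 / n !) {a b : ℕ} (hba : b ≤ a) (z : ℂ) :
    ∫ w : ℂ, w ^ a * conj w ^ b * (∑' n, c n * (z * conj w) ^ n) * (Real.exp (-‖w‖ ^ 2) : ℂ)
      = π * a ! * c (a - b) * z ^ (a - b) := by
  set g : ℂ → ℂ := fun w => w ^ a * conj w ^ b * (Real.exp (-‖w‖ ^ 2) : ℂ)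
  have hint : Integrable (fun w => ‖g w‖ * Real.exp ‖z * conj w‖) := by
    refine (integrable_pow_norm_mul_exp_neg_sq_mul_exp (a + b) ‖z‖).congr
      (Eventually.of_forall fun w => ?_)
    simp only [g, norm_mul, norm_pow, RCLike.norm_conj, norm_real, Real.norm_eq_abs,
      Real.abs_exp, pow_add]
  have hterm (n : ℕ) : ∫ w, g w * (c n * (z * conj w) ^ n) =
      c n * z ^ n * ∫ w : ℂ, w ^ a * conj w ^ (b + n) * (Real.exp (-‖w‖ ^ 2) : ℂ) := by
    rw [← integral_const_mul]
    congr 1 with w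
    simp only [g]
    ring
  have hsum := hasSum_integral_mul_series hc (by fun_prop : Continuous g).aestronglyMeasurable
    (by fun_prop : Continuous fun w : ℂ => z * conj w).aestronglyMeasurable hint
  simp_rw [hterm] at hsum
  have hsingle := hasSum_single (f := fun n => c n * z ^ n *
      ∫ w : ℂ, w ^ a * conj w ^ (b + n) * (Real.exp (-‖w‖ ^ 2) : ℂ)) (a - b) fun n hn => by
    rw [integral_pow_mul_conj_pow_mul_gaussian_of_ne (by omega), mul_zero]
  simp only [Nat.add_sub_cancel' hba, integral_pow_mul_conj_pow_self_mul_gaussian] at hsingle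
  calc _ = ∫ w, g w * ∑' n, c n * (z * conj w) ^ n := by
        congr 1 with w
        simp only [g]
        ring
    _ = _ := by rw [hsum.unique hsingle]; ring

lemma norm_factorial_div_factorial_add_le (m n : ℕ) : ‖(m ! : ℂ) / (n + m)!‖ ≤ 1 / n ! := by
  rw [norm_div, Complex.norm_natCast, Complex.norm_natCast,
    div_le_div_iff₀ (by positivity) (by positivity), one_mul]
  exact_mod_cast Nat.le_of_dvd (Nat.factorial_pos _)
    (by simpa [mul_comm] using Nat.factorial_mul_factorial_dvd_factorial_add n m)

theorem stmt2 (k l j m : ℕ) (h : k ≤ j + l) (z : ℂ) :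
    (1 / ((Real.pi : ℂ) * (Nat.factorial m : ℂ))) *
      ∫ w : ℂ, w ^ l * ((starRingEnd ℂ) w) ^ k * w ^ j * fockKernel m z w *
        ((‖w‖ : ℂ)) ^ (2 * m) * (Real.exp (-(‖w‖) ^ 2) : ℂ)
    = ((Nat.factorial (j + l + m) : ℂ) / (Nat.factorial (j + l - k + m) : ℂ)) * z ^ (j + l - k) := by
  have hintegrand (w : ℂ) : w ^ l * conj w ^ k * w ^ j * fockKernel m z w *
      (‖w‖ : ℂ) ^ (2 * m) * (Real.exp (-‖w‖ ^ 2) : ℂ) =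
      w ^ (j + l + m) * conj w ^ (k + m) *
        (∑' n, (m ! : ℂ) / (n + m)! * (z * conj w) ^ n) * (Real.exp (-‖w‖ ^ 2) : ℂ) := by
    rw [fockKernel, pow_mul, ← mul_conj']
    ring
  rw [integral_congr_ae (Eventually.of_forall hintegrand),
    integral_pow_mul_conj_pow_mul_series_mul_gaussian (norm_factorial_div_factorial_add_le m)
      (by omega), show j + l + m - (k + m) = j + l - k by omega]
  have hm : (m ! : ℂ) ≠ 0 := Nat.cast_ne_zero.2 m.factorial_ne_zero
  field_simp
end

section
/- Let m be a non-negative integer and let w_1, …, w_N be distinct non-zero complex numbers. Then the functions z ↦ 1 − K_m(z, w_i), for i = 1, …, N, are linearly independent over ℂ, where K_m(z,w) = Σ_{n≥0} (m!/(n+m)!)(z·w̄)^n. -/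
/-!
Put `x i = conj (w i)` and `b n = ∑ i, a i * x i ^ n`. Expanding the kernel, the hypothesis
says that the entire power series `∑ n, m! / (n + m)! * b n * z ^ n` is the constant `b 0`.
By uniqueness of power series coefficients, `b n = 0` for every `n ≥ 1`; as the `x i` are
distinct and nonzero, invertibility of the Vandermonde matrix of the `x i` forces `a = 0`.
-/

open Finset

open Filter Topology FormalMultilinearSeries

open scoped Nat

section PowerSeries

variable {𝕜 : Type*} [NontriviallyNormedField 𝕜]

theorem hasFPowerSeriesOnBall_ofScalars_of_forall_hasSum {d : ℕ → 𝕜} {f : 𝕜 → 𝕜}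
    (h : ∀ z, HasSum (fun n => d n * z ^ n) (f z)) :
    HasFPowerSeriesOnBall f (ofScalars 𝕜 d) 0 1 where
  r_le := by
    have hd : Tendsto (fun n => ‖ofScalars 𝕜 d n‖ * (1 : NNReal) ^ n) atTop (𝓝 0) := by
      simpa [ofScalars_norm] using (h 1).summable.tendsto_atTop_zero.norm
    exact_mod_cast le_radius_of_tendsto _ hd
  r_pos := one_pos
  hasSum {z} _ := by simpa [ofScalars_apply_eq, mul_comm] using h z

theorem coeff_eq_of_forall_hasSum_mul_pow {d₁ d₂ : ℕ → 𝕜} {f : 𝕜 → 𝕜}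
    (h₁ : ∀ z, HasSum (fun n => d₁ n * z ^ n) (f z))
    (h₂ : ∀ z, HasSum (fun n => d₂ n * z ^ n) (f z)) : d₁ = d₂ :=
  ofScalars_series_injective (E := 𝕜) 𝕜 <|
    HasFPowerSeriesAt.eq_formalMultilinearSeries
      (hasFPowerSeriesOnBall_ofScalars_of_forall_hasSum h₁).hasFPowerSeriesAt
      (hasFPowerSeriesOnBall_ofScalars_of_forall_hasSum h₂).hasFPowerSeriesAt

end PowerSeries

theorem hasSum_sum_mul_comp_mul {R ι : Type*} [CommSemiring R] [TopologicalSpace R]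
    [IsTopologicalSemiring R] (s : Finset ι) (a x : ι → R) {e : ℕ → R} {F : R → R}
    (hF : ∀ u, HasSum (fun n => e n * u ^ n) (F u)) (z : R) :
    HasSum (fun n => e n * (∑ i ∈ s, a i * x i ^ n) * z ^ n)
      (∑ i ∈ s, a i * F (z * x i)) := by
  have hterm : ∀ n, e n * (∑ i ∈ s, a i * x i ^ n) * z ^ n =
      ∑ i ∈ s, a i * (e n * (z * x i) ^ n) := fun n => by
    simp only [mul_sum, sum_mul, mul_pow]
    exact sum_congr rfl fun i _ => by ring
  simp only [hterm]
  exact hasSum_sum fun i _ => (hF (z * x i)).mul_left (a i)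

theorem eq_zero_of_forall_sum_mul_pow_succ_eq_zero {R : Type*} [CommRing R] [IsDomain R] {N : ℕ}
    {a x : Fin N → R} (hx : Function.Injective x) (hx0 : ∀ i, x i ≠ 0)
    (h : ∀ n, ∑ i, a i * x i ^ (n + 1) = 0) : a = 0 := by
  have hax : (fun i => a i * x i) = 0 :=
    Matrix.eq_zero_of_forall_pow_sum_mul_pow_eq_zero hx fun n => by
      simpa only [pow_succ, mul_assoc, mul_comm (x _)] using h n
  funext i
  exact (mul_eq_zero.mp (congrFun hax i)).resolve_right (hx0 i)

noncomputable def fockCoeff (m n : ℕ) : ℂ := (m ! : ℂ) / (n + m)!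

theorem fockCoeff_ne_zero (m n : ℕ) : fockCoeff m n ≠ 0 :=
  div_ne_zero (Nat.cast_ne_zero.mpr m.factorial_ne_zero)
    (Nat.cast_ne_zero.mpr (n + m).factorial_ne_zero)

theorem norm_fockCoeff_le (m n : ℕ) : ‖fockCoeff m n‖ ≤ (n ! : ℝ)⁻¹ := by
  have hdvd : (n ! * m ! : ℝ) ≤ (n + m)! := by
    exact_mod_cast Nat.le_of_dvd (Nat.factorial_pos _)
      (Nat.factorial_mul_factorial_dvd_factorial_add n m)
  rw [fockCoeff, norm_div, Complex.norm_natCast, Complex.norm_natCast,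
    div_le_iff₀ (by positivity), inv_mul_eq_div, le_div_iff₀ (by positivity)]
  linarith

theorem summable_fockCoeff_mul_pow (m : ℕ) (u : ℂ) :
    Summable fun n => fockCoeff m n * u ^ n := by
  refine Summable.of_norm_bounded (Real.summable_pow_div_factorial ‖u‖) fun n => ?_
  rw [norm_mul, norm_pow, div_eq_inv_mul]
  exact mul_le_mul_of_nonneg_right (norm_fockCoeff_le m n) (by positivity)

theorem stmt3 (m N : ℕ) (w : Fin N → ℂ) (hw : Function.Injective w)
    (hw0 : ∀ i, w i ≠ 0) (a : Fin N → ℂ)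
    (h : ∀ z : ℂ, ∑ i, a i * (1 - fockKernel m z (w i)) = 0) :
    ∀ i, a i = 0 := by
  set x : Fin N → ℂ := fun i => starRingEnd ℂ (w i)
  set b : ℕ → ℂ := fun n => ∑ i, a i * x i ^ n
  have hkernel : ∀ z, HasSum (fun n => fockCoeff m n * b n * z ^ n)
      (∑ i, a i * fockKernel m z (w i)) :=
    hasSum_sum_mul_comp_mul univ a x fun u => (summable_fockCoeff_mul_pow m u).hasSum
  have hconst : ∀ z, HasSum (fun n => (if n = 0 then b 0 else 0) * z ^ n)
      (∑ i, a i * fockKernel m z (w i)) := by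
    intro z
    have hz := h z
    simp only [mul_sub, mul_one, sum_sub_distrib, sub_eq_zero] at hz
    rw [← hz]
    convert hasSum_single (f := fun n => (if n = 0 then b 0 else 0) * z ^ n) 0
      fun n hn => by simp [hn]
    simp [b]
  have hpow_sum : ∀ n, b (n + 1) = 0 := fun n => by
    simpa [fockCoeff_ne_zero] using
      congrFun (coeff_eq_of_forall_hasSum_mul_pow hkernel hconst) (n + 1)
  have hx : Function.Injective x := (starRingEnd ℂ).injective.comp hw
  have hx0 : ∀ i, x i ≠ 0 := by simpa [x] using hw0
  exact congrFun (eq_zero_of_forall_sum_mul_pow_succ_eq_zero hx hx0 hpow_sum)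
end

section
/- Let m be a non-negative integer and let A, B be non-zero complex numbers satisfying Σ_{k≥0} m!·(AB)^k/((k+m)!) = 1. Let j, l be integers with l ≥ j ≥ 2, and let C_0, …, C_j be defined by ∏_{i=1}^j (l+k+m−j+i) = C_0 + Σ_{i=1}^j C_i ∏_{λ=0}^{i−1}(k+m−λ). Define C(j,l) = Σ_{k≥0} (m!/((k+m)!)) · ((l+k+m)!/((k+l−j+m)!)) · A^k B^{l+k−j} − Σ_{k=0}^{j} (m!/((k+m)!)) · ((j+m)!/((k+l−j+m)!)) · ((l+m)!/((j−k+m)!)) · A^k B^{l+k−j}. Then C(j,l) = Σ_{k=1}^{j−1} Q_k A^k B^{l+k−j} − Σ_{i=0}^{j−2} C_i A^i B^{l+i−j} · (Σ_{k=1}^{j−i−1} m!(AB)^k/((k+m)!)), where Q_k = (m!/((k+m)!)) · [(l+k+m)!/((k+l−j+m)!) − ((j+m)!/((k+l−j+m)!)) · ((l+m)!/((j−k+m)!))]. -/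
/-!
For `k ≥ j` the ratio `(l+k+m)!/(k+l−j+m)!` is the product `∏_{i=1}^j (l+k+m−j+i)`, so the
defining identity of the `C_i` turns the `k`-th term of the series into
`Σ_{i≤j} C_i A^i B^{l+i−j} · m!(AB)^{k−i}/(k−i+m)!`. Summing over `k ≥ j`, each inner series is a
tail of `Σ_k m!(AB)^k/(k+m)! = 1`, i.e. `1` minus a finite sum. The defining identity is an identity
of polynomials in `k`, and comparing leading coefficients gives `C_j = 1`; so the `i = j` term
cancels the `k = j` term of the finite sum, the `k = 0` terms of the two sums agree, and what is
left is the claimed expression.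
-/

open Finset Nat

theorem Finset.sum_range_succ_eq_add_sum_Icc {M : Type*} [AddCommMonoid M] (f : ℕ → M) (n : ℕ) :
    ∑ i ∈ range (n + 1), f i = f 0 + ∑ i ∈ Icc 1 n, f i := by
  rw [range_eq_Ico, sum_eq_sum_Ico_succ_bot n.succ_pos]
  rfl

open Polynomial in
theorem Polynomial.coeff_prod_X_add_C_of_card_le {R ι : Type*} [CommRing R] [Nontrivial R]
    (s : Finset ι) (f : ι → R) {n : ℕ} (hn : #s ≤ n) :
    (∏ i ∈ s, (X + C (f i))).coeff n = if n = #s then 1 else 0 := by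
  have hmonic : (∏ i ∈ s, (X + C (f i))).Monic := monic_prod_of_monic _ _ fun i _ => monic_X_add_C _
  have hdeg : (∏ i ∈ s, (X + C (f i))).natDegree = #s := by
    simp [natDegree_prod_of_monic _ _ fun i _ => monic_X_add_C (f i)]
  split_ifs with h
  · rw [h, ← hdeg, hmonic.coeff_natDegree]
  · exact coeff_eq_zero_of_natDegree_lt (by omega)

open Polynomial in
theorem coeff_card_eq_one_of_prod_eq_sum_prod {R ι : Type*} [CommRing R] [IsDomain R] [CharZero R]
    (s : Finset ι) (a : ι → R) (b c : ℕ → R)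
    (h : ∀ k : ℕ, ∏ i ∈ s, ((k : R) + a i)
      = ∑ i ∈ range (#s + 1), c i * ∏ x ∈ range i, ((k : R) + b x)) :
    c #s = 1 := by
  set P : R[X] := ∏ i ∈ s, (X + C (a i))
  set Q : R[X] := ∑ i ∈ range (#s + 1), C (c i) * ∏ x ∈ range i, (X + C (b x))
  have hPQ : P = Q := by
    refine eq_of_infinite_eval_eq P Q
      (Set.Infinite.mono ?_ (Set.infinite_range_of_injective Nat.cast_injective))
    rintro _ ⟨k, rfl⟩
    simpa [P, Q, eval_prod, eval_finsetSum] using h k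
  have hQ : Q.coeff #s = c #s := by
    rw [finsetSum_coeff, sum_eq_single_of_mem #s (self_mem_range_succ _)]
    · rw [coeff_C_mul, coeff_prod_X_add_C_of_card_le _ _ (card_range _).le, card_range, if_pos rfl,
        mul_one]
    · intro i hi hne
      have : #(range i) ≤ #s := by simp at hi ⊢; omega
      rw [coeff_C_mul, coeff_prod_X_add_C_of_card_le _ _ this, card_range, if_neg (Ne.symm hne),
        mul_zero]
  rw [← hQ, ← hPQ, coeff_prod_X_add_C_of_card_le _ _ le_rfl, if_pos rfl]

theorem prod_Icc_natCast_add_eq_factorial_div {K : Type*} [Field K] [CharZero K] (a b : ℕ) :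
    ∏ i ∈ Icc 1 b, ((a : K) + i) = (a + b)! / a ! := by
  rw [eq_div_iff (cast_ne_zero.2 (factorial_ne_zero a)), ← factorial_mul_ascFactorial,
    ascFactorial_eq_prod_range, ← Ico_add_one_right_eq_Icc, prod_Ico_eq_prod_range, cast_mul,
    cast_prod, mul_comm, add_tsub_cancel_right]
  congr 1
  exact prod_congr rfl fun i _ => by push_cast; ring

theorem prod_range_natCast_sub_eq_factorial_div {K : Type*} [Field K] [CharZero K] {n i : ℕ}
    (h : i ≤ n) : ∏ x ∈ range i, ((n : K) - x) = n ! / (n - i)! := by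
  rw [eq_div_iff (cast_ne_zero.2 (factorial_ne_zero _)), ← factorial_mul_descFactorial h,
    descFactorial_eq_prod_range, cast_mul, cast_prod, mul_comm]
  congr 1
  exact prod_congr rfl fun x hx => by rw [cast_sub (by simp at hx; omega)]

theorem summable_of_tsum_ne_zero {α β : Type*} [AddCommMonoid α] [TopologicalSpace α]
    {f : β → α} (h : ∑' b, f b ≠ 0) : Summable f := by
  by_contra hf
  exact h (tsum_eq_zero_of_not_summable hf)

theorem tsum_eq_sum_range_add_of_shift {K ι : Type*} [Field K] [TopologicalSpace K]
    [IsTopologicalRing K] [T2Space K] {F g : ℕ → K} (hg : Summable g) (j : ℕ) (s : Finset ι)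
    (c : ι → K) (d : ι → ℕ) (hF : ∀ n, F (n + j) = ∑ i ∈ s, c i * g (n + d i)) :
    ∑' k, F k = ∑ k ∈ range j, F k + ∑ i ∈ s, c i * ∑' n, g (n + d i) := by
  have hterm : ∀ i ∈ s, Summable fun n => c i * g (n + d i) :=
    fun i _ => ((summable_nat_add_iff (d i)).2 hg).mul_left _
  have hshift : Summable fun n => F (n + j) := by
    simpa only [hF] using summable_sum hterm
  rw [← ((summable_nat_add_iff j).1 hshift).sum_add_tsum_nat_add j, tsum_congr hF,
    Summable.tsum_finsetSum hterm]
  simp only [tsum_mul_left]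

theorem sum_range_succ_mul_one_sub_sum_range {R : Type*} [CommRing R] {j : ℕ} (hj : 1 ≤ j)
    (c g : ℕ → R) (hg : g 0 = 1) :
    ∑ i ∈ range (j + 1), c i * (1 - ∑ k ∈ range (j - i), g k)
      = c j - ∑ i ∈ range (j - 1), c i * ∑ k ∈ Icc 1 (j - i - 1), g k := by
  obtain ⟨j, rfl⟩ := Nat.exists_eq_add_of_le' hj
  have htail : ∀ i ∈ range j,
      1 - ∑ k ∈ range (j + 1 - i), g k = -∑ k ∈ Icc 1 (j + 1 - i - 1), g k := by
    intro i hi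
    rw [show j + 1 - i = j - i + 1 by simp at hi; omega, sum_range_succ_eq_add_sum_Icc, hg,
      add_tsub_cancel_right]
    ring
  rw [sum_range_succ, sum_range_succ, sum_congr rfl fun i hi => congrArg (c i * ·) (htail i hi)]
  rw [add_tsub_cancel_right, Nat.add_sub_cancel_left, Nat.sub_self, sum_range_one, hg,
    sum_range_zero]
  simp only [mul_neg, sum_neg_distrib]
  ring

theorem sum_range_sub_sum_range_succ {M : Type*} [AddCommGroup M] {j : ℕ} (hj : 1 ≤ j)
    (a b : ℕ → M) (h0 : a 0 = b 0) :
    ∑ k ∈ range j, a k - ∑ k ∈ range (j + 1), b k = ∑ k ∈ Icc 1 (j - 1), (a k - b k) - b j := by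
  obtain ⟨j, rfl⟩ := Nat.exists_eq_add_of_le' hj
  rw [sum_range_succ _ (j + 1), sum_range_succ_eq_add_sum_Icc, sum_range_succ_eq_add_sum_Icc,
    add_tsub_cancel_right, sum_sub_distrib, h0]
  abel

noncomputable section

/-- `∑' k, phiTerm m z k = m! z⁻ᵐ (eᶻ - Σ_{n<m} zⁿ/n!)`. -/
def phiTerm (m : ℕ) (z : ℂ) (k : ℕ) : ℂ := (m ! : ℂ) * z ^ k / ((k + m)! : ℂ)

/-- `C(j,l) = ∑' k, seriesCoeff k * A^k B^(l+k-j) - ∑_{k ≤ j} finiteCoeff k * A^k B^(l+k-j)`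
and `Q_k = seriesCoeff k - finiteCoeff k`. -/
def seriesCoeff (m j l k : ℕ) : ℂ :=
  ((m ! : ℂ) / ((k + m)! : ℂ)) * (((l + k + m)! : ℂ) / ((k + l - j + m)! : ℂ))

def finiteCoeff (m j l k : ℕ) : ℂ :=
  ((m ! : ℂ) / ((k + m)! : ℂ)) * (((j + m)! : ℂ) / ((k + l - j + m)! : ℂ)) *
    (((l + m)! : ℂ) / ((j - k + m)! : ℂ))

/-- The defining identity of `C₀, …, C_j`, with `C₀` as the `i = 0` term of the sum. -/
def HasFallingExpansion (m j l : ℕ) (C : ℕ → ℂ) : Prop :=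
  ∀ k : ℕ, ∏ i ∈ Icc 1 j, ((l : ℂ) + k + m - j + i)
    = ∑ i ∈ range (j + 1), C i * ∏ x ∈ range i, ((k : ℂ) + m - x)

end

theorem phiTerm_zero (m : ℕ) (z : ℂ) : phiTerm m z 0 = 1 := by
  simp [phiTerm, factorial_ne_zero]

theorem seriesCoeff_zero (m j l : ℕ) : seriesCoeff m j l 0 = finiteCoeff m j l 0 := by
  simp only [seriesCoeff, finiteCoeff, zero_add, add_zero, Nat.sub_zero]
  field_simp [factorial_ne_zero]

theorem finiteCoeff_self (m j l : ℕ) : finiteCoeff m j l j = 1 := by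
  simp only [finiteCoeff, Nat.add_sub_cancel_left, Nat.sub_self, zero_add]
  field_simp [factorial_ne_zero]

section Series

variable {m j l : ℕ} {C : ℕ → ℂ}

theorem HasFallingExpansion.coeff_self (hC : HasFallingExpansion m j l C) : C j = 1 := by
  have := coeff_card_eq_one_of_prod_eq_sum_prod (Icc 1 j) (fun i => (l + m - j + i : ℂ))
    (fun x => (m - x : ℂ)) C fun k => by
      rw [card_Icc, add_tsub_cancel_right]
      refine (prod_congr rfl fun i _ => by ring).trans ((hC k).trans
        (sum_congr rfl fun i _ => congrArg _ (prod_congr rfl fun x _ => by ring)))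
  rwa [card_Icc, add_tsub_cancel_right] at this

theorem seriesCoeff_add (hC : HasFallingExpansion m j l C) (n : ℕ) :
    seriesCoeff m j l (n + j) = ∑ i ∈ range (j + 1), C i * ((m ! : ℂ) / (n + (j - i) + m)!) := by
  have hrising : ((l + (n + j) + m)! : ℂ) / (n + j + l - j + m)!
      = ∏ i ∈ Icc 1 j, ((l : ℂ) + (n + j : ℕ) + m - j + i) := by
    rw [show n + j + l - j + m = n + l + m by omega, show l + (n + j) + m = n + l + m + j by omega,
      ← prod_Icc_natCast_add_eq_factorial_div]
    exact prod_congr rfl fun i _ => by push_cast; ring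
  have hfalling : ∀ i ∈ range (j + 1),
      ∏ x ∈ range i, (((n + j : ℕ) : ℂ) + m - x) = (n + j + m)! / (n + (j - i) + m)! := by
    intro i hi
    rw [show n + (j - i) + m = n + j + m - i by simp at hi; omega,
      ← prod_range_natCast_sub_eq_factorial_div (by simp at hi; omega)]
    exact prod_congr rfl fun x _ => by push_cast; ring
  rw [seriesCoeff, hrising, hC, mul_sum]
  refine sum_congr rfl fun i hi => ?_
  rw [hfalling i hi]
  field_simp [factorial_ne_zero]

theorem seriesCoeff_add_mul_pow (hl : j ≤ l) (hC : HasFallingExpansion m j l C) (A B : ℂ) (n : ℕ) :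
    seriesCoeff m j l (n + j) * A ^ (n + j) * B ^ (l + (n + j) - j)
      = ∑ i ∈ range (j + 1), C i * A ^ i * B ^ (l + i - j) * phiTerm m (A * B) (n + (j - i)) := by
  rw [seriesCoeff_add hC, sum_mul, sum_mul]
  refine sum_congr rfl fun i hi => ?_
  rw [show l + (n + j) - j = l + i - j + (n + (j - i)) by simp at hi; omega,
    show n + j = i + (n + (j - i)) by simp at hi; omega, pow_add, pow_add, phiTerm, mul_pow]
  ring

theorem tsum_seriesCoeff_mul_pow (hl : j ≤ l) (hC : HasFallingExpansion m j l C) {A B : ℂ}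
    (hsum : ∑' k, phiTerm m (A * B) k = 1) :
    ∑' k, seriesCoeff m j l k * A ^ k * B ^ (l + k - j)
      = ∑ k ∈ range j, seriesCoeff m j l k * A ^ k * B ^ (l + k - j)
        + ∑ i ∈ range (j + 1), C i * A ^ i * B ^ (l + i - j) *
            (1 - ∑ k ∈ range (j - i), phiTerm m (A * B) k) := by
  have hg : Summable (phiTerm m (A * B)) := summable_of_tsum_ne_zero (hsum ▸ one_ne_zero)
  rw [tsum_eq_sum_range_add_of_shift hg j (range (j + 1)) _ (fun i => j - i)
    (seriesCoeff_add_mul_pow hl hC A B)]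
  refine congrArg _ (sum_congr rfl fun i _ => ?_)
  rw [← hsum, ← hg.sum_add_tsum_nat_add (j - i), add_sub_cancel_left]

end Series

theorem stmt7_general (m : ℕ) (A B : ℂ)
    (hsum : ∑' k : ℕ, (Nat.factorial m : ℂ) * (A * B) ^ k / (Nat.factorial (k + m) : ℂ) = 1)
    (j l : ℕ) (hj : 2 ≤ j) (hl : j ≤ l) (C : ℕ → ℂ)
    (hC : ∀ k : ℕ, ∏ i ∈ Finset.Icc 1 j, ((l : ℂ) + k + m - j + i)
      = C 0 + ∑ i ∈ Finset.Icc 1 j, C i * ∏ x ∈ Finset.range i, ((k : ℂ) + m - x)) :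
    (∑' k : ℕ, ((Nat.factorial m : ℂ) / (Nat.factorial (k + m) : ℂ)) *
        ((Nat.factorial (l + k + m) : ℂ) / (Nat.factorial (k + l - j + m) : ℂ)) *
        A ^ k * B ^ (l + k - j))
      - (∑ k ∈ Finset.range (j + 1), ((Nat.factorial m : ℂ) / (Nat.factorial (k + m) : ℂ)) *
          ((Nat.factorial (j + m) : ℂ) / (Nat.factorial (k + l - j + m) : ℂ)) *
          ((Nat.factorial (l + m) : ℂ) / (Nat.factorial (j - k + m) : ℂ)) *
          A ^ k * B ^ (l + k - j))
    = (∑ k ∈ Finset.Icc 1 (j - 1),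
        (((Nat.factorial m : ℂ) / (Nat.factorial (k + m) : ℂ)) *
          ((Nat.factorial (l + k + m) : ℂ) / (Nat.factorial (k + l - j + m) : ℂ))
          - ((Nat.factorial m : ℂ) / (Nat.factorial (k + m) : ℂ)) *
            ((Nat.factorial (j + m) : ℂ) / (Nat.factorial (k + l - j + m) : ℂ)) *
            ((Nat.factorial (l + m) : ℂ) / (Nat.factorial (j - k + m) : ℂ))) *
          A ^ k * B ^ (l + k - j))
      - ∑ i ∈ Finset.range (j - 1),
          C i * A ^ i * B ^ (l + i - j) *
            (∑ k ∈ Finset.Icc 1 (j - i - 1),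
              (Nat.factorial m : ℂ) * (A * B) ^ k / (Nat.factorial (k + m) : ℂ)) := by
  have hC' : HasFallingExpansion m j l C := fun k => by
    rw [hC k, sum_range_succ_eq_add_sum_Icc, prod_range_zero, mul_one]
  have hfinite := sum_range_sub_sum_range_succ (by omega : 1 ≤ j)
    (fun k => seriesCoeff m j l k * A ^ k * B ^ (l + k - j))
    (fun k => finiteCoeff m j l k * A ^ k * B ^ (l + k - j)) (by simp only [seriesCoeff_zero])
  have hphi := sum_range_succ_mul_one_sub_sum_range (by omega : 1 ≤ j)
    (fun i => C i * A ^ i * B ^ (l + i - j)) (phiTerm m (A * B)) (phiTerm_zero m _)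
  have htop : finiteCoeff m j l j * A ^ j * B ^ (l + j - j) = C j * A ^ j * B ^ (l + j - j) := by
    rw [finiteCoeff_self, hC'.coeff_self]
  change ∑' k, seriesCoeff m j l k * A ^ k * B ^ (l + k - j)
      - ∑ k ∈ range (j + 1), finiteCoeff m j l k * A ^ k * B ^ (l + k - j)
    = ∑ k ∈ Icc 1 (j - 1), (seriesCoeff m j l k - finiteCoeff m j l k) * A ^ k * B ^ (l + k - j)
      - ∑ i ∈ range (j - 1), C i * A ^ i * B ^ (l + i - j) *
          ∑ k ∈ Icc 1 (j - i - 1), phiTerm m (A * B) k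
  rw [tsum_seriesCoeff_mul_pow hl hC' hsum]
  simp only [sub_mul] at hfinite ⊢
  linear_combination hfinite + hphi - htop

theorem stmt7 (m : ℕ) (A B : ℂ) (hA : A ≠ 0) (hB : B ≠ 0)
    (hsum : ∑' k : ℕ, (Nat.factorial m : ℂ) * (A * B) ^ k / (Nat.factorial (k + m) : ℂ) = 1)
    (j l : ℕ) (hj : 2 ≤ j) (hl : j ≤ l) (C : ℕ → ℂ)
    (hC : ∀ k : ℕ, ∏ i ∈ Finset.Icc 1 j, ((l : ℂ) + k + m - j + i)
      = C 0 + ∑ i ∈ Finset.Icc 1 j, C i * ∏ x ∈ Finset.range i, ((k : ℂ) + m - x)) :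
    (∑' k : ℕ, ((Nat.factorial m : ℂ) / (Nat.factorial (k + m) : ℂ)) *
        ((Nat.factorial (l + k + m) : ℂ) / (Nat.factorial (k + l - j + m) : ℂ)) *
        A ^ k * B ^ (l + k - j))
      - (∑ k ∈ Finset.range (j + 1), ((Nat.factorial m : ℂ) / (Nat.factorial (k + m) : ℂ)) *
          ((Nat.factorial (j + m) : ℂ) / (Nat.factorial (k + l - j + m) : ℂ)) *
          ((Nat.factorial (l + m) : ℂ) / (Nat.factorial (j - k + m) : ℂ)) *
          A ^ k * B ^ (l + k - j))
    = (∑ k ∈ Finset.Icc 1 (j - 1),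
        (((Nat.factorial m : ℂ) / (Nat.factorial (k + m) : ℂ)) *
          ((Nat.factorial (l + k + m) : ℂ) / (Nat.factorial (k + l - j + m) : ℂ))
          - ((Nat.factorial m : ℂ) / (Nat.factorial (k + m) : ℂ)) *
            ((Nat.factorial (j + m) : ℂ) / (Nat.factorial (k + l - j + m) : ℂ)) *
            ((Nat.factorial (l + m) : ℂ) / (Nat.factorial (j - k + m) : ℂ))) *
          A ^ k * B ^ (l + k - j))
      - ∑ i ∈ Finset.range (j - 1),
          C i * A ^ i * B ^ (l + i - j) *
            (∑ k ∈ Finset.Icc 1 (j - i - 1),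
              (Nat.factorial m : ℂ) * (A * B) ^ k / (Nat.factorial (k + m) : ℂ)) :=
  stmt7_general m A B hsum j l hj hl C hC
end

section
/- Let m be a positive integer and let a, b be complex numbers with a·b̄ ≠ 0. Then the system of equations (a·b̄)·e^{a·b̄} + m·(e^{a·b̄} − 1) = 0 and (a·b̄)²·e^{a·b̄} + 2m·(a·b̄)·e^{a·b̄} + m(m−1)·(e^{a·b̄} − 1) = 0 has no solution. -/
theorem stmt10 (m : ℕ) (hm : 0 < m) (a b : ℂ) (hab : a * (starRingEnd ℂ) b ≠ 0) :
    ¬ ((a * (starRingEnd ℂ) b) * Complex.exp (a * (starRingEnd ℂ) b)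
          + (m : ℂ) * (Complex.exp (a * (starRingEnd ℂ) b) - 1) = 0
        ∧ (a * (starRingEnd ℂ) b) ^ 2 * Complex.exp (a * (starRingEnd ℂ) b)
          + 2 * (m : ℂ) * (a * (starRingEnd ℂ) b) * Complex.exp (a * (starRingEnd ℂ) b)
          + (m : ℂ) * ((m : ℂ) - 1) * (Complex.exp (a * (starRingEnd ℂ) b) - 1) = 0) := by
  rintro ⟨h1, h2⟩
  set z := a * (starRingEnd ℂ) b with hzdef
  set E := Complex.exp z with hEdef
  have hE : E ≠ 0 := Complex.exp_ne_zero z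
  have h3 : z * E * (z + (m : ℂ) + 1) = 0 := by linear_combination h2 - ((m : ℂ) - 1) * h1
  have hz : z = -((m : ℂ) + 1) := by
    rcases mul_eq_zero.mp h3 with h | h
    · exact absurd (mul_eq_zero.mp h) (by simp [hab, hE])
    · linear_combination h
  have hEm : E = -(m : ℂ) := by
    rw [hz] at h1
    linear_combination -h1
  have hzr : z = ((-( (m:ℝ) + 1) : ℝ) : ℂ) := by rw [hz]; push_cast; ring
  have : Complex.exp z = ((Real.exp (-((m:ℝ) + 1)) : ℝ) : ℂ) := by
    rw [hzr, Complex.ofReal_exp]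
  rw [← hEdef, hEm] at this
  have hre : -(m : ℝ) = Real.exp (-((m:ℝ) + 1)) := by
    have h' : ((Real.exp (-((m:ℝ) + 1)) : ℝ) : ℂ) = ((-(m:ℝ) : ℝ) : ℂ) := by
      rw [← this]; push_cast; ring
    exact (Complex.ofReal_inj.mp h').symm
  have hpos := Real.exp_pos (-((m:ℝ) + 1))
  rw [← hre] at hpos
  have : (0:ℝ) < (m:ℝ) := by exact_mod_cast hm
  linarith
end
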